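/- Assume that for every t < T one has S_t − m(S_{t+1}|𝓕_t) > 0 P-a.s. and M(S_{t+1}|𝓕_t) − S_t > 0 P-a.s. Then the market satisfies NA (no arbitrage) if and only if it satisfies AIP, where NA means: for every t < T and every terminal portfolio value v = Σ_{u=t}^{T−1} θ_u·(S_{u+1} − S_u) with each θ_u 𝓕_u-measurable and essentially bounded, if v ≥ 0 P-a.s. then v = 0 P-a.s. -/

import Mathlib

open MeasureTheory Filter

/-- A real random variable is essentially bounded w.r.t. the measure `P`. -/
def EssBdd {Ω : Type*} {F : MeasurableSpace Ω} (P : @Measure Ω F) (X : Ω → ℝ) : Prop :=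
  ∃ C : ℝ, ∀ᵐ ω ∂P, |X ω| ≤ C

/-- `Y` is the conditional essential supremum `M(X|H)` of `X` given the sub-σ-algebra `H`:
`Y` is `H`-measurable, essentially bounded, `X ≤ Y` a.s., and `Y` is a.s. below every
`H`-measurable `Z` with `X ≤ Z` a.s. -/
def IsCondEssSup {Ω : Type*} {F : MeasurableSpace Ω} (P : @Measure Ω F)
    (H : MeasurableSpace Ω) (X Y : Ω → ℝ) : Prop :=
  Measurable[H] Y ∧ EssBdd P Y ∧ (∀ᵐ ω ∂P, X ω ≤ Y ω) ∧
    ∀ Z : Ω → ℝ, Measurable[H] Z → (∀ᵐ ω ∂P, X ω ≤ Z ω) → ∀ᵐ ω ∂P, Y ω ≤ Z ω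

/-- `Y` is the conditional essential infimum `m(X|H) = -M(-X|H)`. -/
def IsCondEssInf {Ω : Type*} {F : MeasurableSpace Ω} (P : @Measure Ω F)
    (H : MeasurableSpace Ω) (X Y : Ω → ℝ) : Prop :=
  IsCondEssSup P H (fun ω => -X ω) (fun ω => -Y ω)

/-- The terminal value `∑_{u=t}^{T-1} θ_u (S_{u+1} − S_u)` of the elementary portfolio `θ`
starting at time `t` with zero initial capital. -/
def PortfolioValue (Ω : Type*) (S θ : ℕ → Ω → ℝ) (t T : ℕ) : Ω → ℝ :=
  fun ω => ∑ u ∈ Finset.Ico t T, θ u ω * (S (u + 1) ω - S u ω)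

/-- A trading strategy is admissible if at each time `u` it is `𝓕ᵤ`-measurable and
essentially bounded. -/
def IsStrategy {Ω : Type*} {F : MeasurableSpace Ω} (P : @Measure Ω F)
    (𝓕 : ℕ → MeasurableSpace Ω) (θ : ℕ → Ω → ℝ) : Prop :=
  ∀ u, Measurable[𝓕 u] (θ u) ∧ EssBdd P (θ u)

/-- Absence of Immediate Profit: for every `t < T` and every admissible strategy, the
conditional essential infimum at time `t` of the associated terminal portfolio value is
nonpositive a.s. -/
def AIP {Ω : Type*} {F : MeasurableSpace Ω} (P : @Measure Ω F)
    (𝓕 : ℕ → MeasurableSpace Ω) (S : ℕ → Ω → ℝ) (T : ℕ) : Prop :=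
  ∀ t, t < T → ∀ θ : ℕ → Ω → ℝ, IsStrategy P 𝓕 θ →
    ∀ mv : Ω → ℝ, IsCondEssInf P (𝓕 t) (PortfolioValue Ω S θ t T) mv →
      ∀ᵐ ω ∂P, mv ω ≤ 0

/-- No Arbitrage: every nonnegative terminal portfolio value obtained from zero initial
capital vanishes a.s. -/
def NA {Ω : Type*} {F : MeasurableSpace Ω} (P : @Measure Ω F)
    (𝓕 : ℕ → MeasurableSpace Ω) (S : ℕ → Ω → ℝ) (T : ℕ) : Prop :=
  ∀ t, t < T → ∀ θ : ℕ → Ω → ℝ, IsStrategy P 𝓕 θ →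
    (∀ᵐ ω ∂P, 0 ≤ PortfolioValue Ω S θ t T ω) →
      PortfolioValue Ω S θ t T =ᵐ[P] fun _ => (0 : ℝ)

/-!
If `NA` holds and `m(V|𝓕ₜ) > 0` on an event `A ∈ 𝓕ₜ`, then trading the same strategy only on
`A` produces a nonnegative terminal value which is positive on `A`, so `P(A) = 0`: this is `AIP`.

Conversely, suppose `v + θ (S_{t+1} - S_t) ≥ 0` with `v`, `θ` both `𝓕ₜ`-measurable. Where `θ > 0`
this says `S_{t+1} ≥ S_t - v/θ`, and since the conditional essential infimum is the largest
`𝓕ₜ`-measurable minorant also locally on `𝓕ₜ`-events, `m(S_{t+1}|𝓕ₜ) ≥ S_t - v/θ` there;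
`S_t > m(S_{t+1}|𝓕ₜ)` then forces `v > 0`. Symmetrically `M(S_{t+1}|𝓕ₜ) > S_t` forces `v > 0`
where `θ < 0`. Hence the value of the strategy up to the last period is a.s. nonnegative, and
by induction on the horizon it vanishes, so `θ = 0` in the last period too: `NA` holds.

Conditional essential suprema of bounded variables exist: the bounded `𝓗`-measurable
majorants are closed under countable infima, and one of minimal integral is a.s. below
every other `𝓗`-measurable majorant.
-/

section CondEssSup

variable {Ω : Type*} {F : MeasurableSpace Ω} {P : @Measure Ω F} {H : MeasurableSpace Ω}
  {X Y Z : Ω → ℝ}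

def boundedCondMajorants (P : @Measure Ω F) (H : MeasurableSpace Ω) (X : Ω → ℝ) (C : ℝ) :
    Set (Ω → ℝ) :=
  {Z | Measurable[H] Z ∧ (∀ᵐ ω ∂P, X ω ≤ Z ω) ∧ ∀ ω, |Z ω| ≤ C}

theorem integrable_of_mem_boundedCondMajorants [IsFiniteMeasure P] (hH : H ≤ F) {C : ℝ}
    (hZ : Z ∈ boundedCondMajorants P H X C) : Integrable Z P :=
  Integrable.of_bound (hZ.1.mono hH le_rfl).aestronglyMeasurable C
    (ae_of_all _ fun ω => (Real.norm_eq_abs _).trans_le (hZ.2.2 ω))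

theorem iInf_mem_boundedCondMajorants {C : ℝ} {W : ℕ → Ω → ℝ}
    (hW : ∀ n, W n ∈ boundedCondMajorants P H X C) :
    (fun ω => ⨅ n, W n ω) ∈ boundedCondMajorants P H X C := by
  have hlower : ∀ n ω, -C ≤ W n ω := fun n ω => (abs_le.mp ((hW n).2.2 ω)).1
  refine ⟨Measurable.iInf fun n => (hW n).1, ?_, fun ω => abs_le.mpr ⟨?_, ?_⟩⟩
  · filter_upwards [ae_all_iff.mpr fun n => (hW n).2.1] with ω h
    exact le_ciInf h
  · exact le_ciInf fun n => hlower n ω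
  · exact (ciInf_le ⟨-C, Set.forall_mem_range.mpr fun n => hlower n ω⟩ 0).trans
      (abs_le.mp ((hW 0).2.2 ω)).2

theorem exists_integral_le_of_boundedCondMajorants [IsFiniteMeasure P] (hH : H ≤ F) {C : ℝ}
    (hne : (boundedCondMajorants P H X C).Nonempty) :
    ∃ Y ∈ boundedCondMajorants P H X C,
      ∀ Z ∈ boundedCondMajorants P H X C, ∫ ω, Y ω ∂P ≤ ∫ ω, Z ω ∂P := by
  set 𝒮 := boundedCondMajorants P H X C
  have hbdd : BddBelow ((fun Z => ∫ ω, Z ω ∂P) '' 𝒮) := by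
    refine ⟨-(P.real Set.univ * C), Set.forall_mem_image.mpr fun Z hZ => ?_⟩
    have := norm_integral_le_of_norm_le_const (μ := P)
      (ae_of_all _ fun ω => (Real.norm_eq_abs _).trans_le (hZ.2.2 ω))
    rw [Real.norm_eq_abs, abs_le] at this
    linarith [this.1]
  obtain ⟨u, -, hu_lim, hu_mem⟩ := exists_seq_tendsto_sInf (hne.image _) hbdd
  choose W hW hWu using hu_mem
  refine ⟨_, iInf_mem_boundedCondMajorants hW, fun Z hZ => ?_⟩
  refine le_trans (ge_of_tendsto' hu_lim fun n => ?_) (csInf_le hbdd ⟨Z, hZ, rfl⟩)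
  rw [← hWu n]
  refine integral_mono (integrable_of_mem_boundedCondMajorants hH
    (iInf_mem_boundedCondMajorants hW)) (integrable_of_mem_boundedCondMajorants hH (hW n))
    fun ω => ?_
  exact ciInf_le ⟨-C, Set.forall_mem_range.mpr fun k => (abs_le.mp ((hW k).2.2 ω)).1⟩ n

theorem exists_isCondEssSup [IsFiniteMeasure P] (hH : H ≤ F) (hX : EssBdd P X) :
    ∃ Y, IsCondEssSup P H X Y := by
  obtain ⟨C₀, hC₀⟩ := hX
  set C := |C₀|
  set 𝒮 := boundedCondMajorants P H X C
  have hXC : ∀ᵐ ω ∂P, |X ω| ≤ C := hC₀.mono fun ω h => h.trans (le_abs_self C₀)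
  have hconst : (fun _ => C) ∈ 𝒮 :=
    ⟨measurable_const, hXC.mono fun ω h => (le_abs_self _).trans h, fun _ => (abs_abs C₀).le⟩
  obtain ⟨Y, hY, hYmin⟩ := exists_integral_le_of_boundedCondMajorants hH ⟨_, hconst⟩
  refine ⟨Y, hY.1, ⟨C, ae_of_all _ hY.2.2⟩, hY.2.1, fun Z hZ hXZ => ?_⟩
  -- `Z` need not be bounded, but its truncation below `Y` and above `-C` lies in `𝒮`
  set W := fun ω => min (Y ω) (max (Z ω) (-C))
  have hW : W ∈ 𝒮 := by
    refine ⟨hY.1.min (hZ.max measurable_const), ?_, fun ω => abs_le.mpr ⟨?_, ?_⟩⟩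
    · filter_upwards [hY.2.1, hXZ] with ω h1 h2
      exact le_min h1 (h2.trans (le_max_left _ _))
    · exact le_min (abs_le.mp (hY.2.2 ω)).1 (le_max_right _ _)
    · exact (min_le_left _ _).trans (abs_le.mp (hY.2.2 ω)).2
  have hWY : W =ᵐ[P] Y :=
    (integral_eq_iff_of_ae_le (integrable_of_mem_boundedCondMajorants hH hW)
      (integrable_of_mem_boundedCondMajorants hH hY)
      (ae_of_all _ fun ω => min_le_left _ _)).mp
      (le_antisymm (integral_mono (integrable_of_mem_boundedCondMajorants hH hW)
        (integrable_of_mem_boundedCondMajorants hH hY) fun ω => min_le_left _ _)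
        (hYmin W hW))
  filter_upwards [hWY, hXZ, hXC] with ω hWYω hXZω hXCω
  have hCZ : -C ≤ Z ω := (abs_le.mp hXCω).1.trans hXZω
  rw [← hWYω]
  exact (min_le_right _ _).trans (max_eq_left hCZ).le

theorem exists_isCondEssInf [IsFiniteMeasure P] (hH : H ≤ F) (hX : EssBdd P X) :
    ∃ Y, IsCondEssInf P H X Y := by
  obtain ⟨C, hC⟩ := hX
  obtain ⟨Y, hY⟩ := exists_isCondEssSup (X := fun ω => -X ω) hH
    ⟨C, hC.mono fun ω h => (abs_neg (X ω)).trans_le h⟩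
  exact ⟨fun ω => -Y ω, by simpa [IsCondEssInf] using hY⟩

theorem IsCondEssSup.ae_le_on (hY : IsCondEssSup P H X Y) {A : Set Ω}
    (hA : MeasurableSet[H] A) (hZ : Measurable[H] Z) (hXZ : ∀ᵐ ω ∂P, ω ∈ A → X ω ≤ Z ω) :
    ∀ᵐ ω ∂P, ω ∈ A → Y ω ≤ Z ω := by
  classical
  have hle := hY.2.2.2 (A.piecewise Z Y) (hZ.piecewise hA hY.1) (by
    filter_upwards [hXZ, hY.2.2.1] with ω h1 h2
    by_cases hω : ω ∈ A <;> simp [hω, h1, h2])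
  filter_upwards [hle] with ω h hω
  simpa [hω] using h

theorem IsCondEssInf.measurable (hY : IsCondEssInf P H X Y) : Measurable[H] Y := by
  have h : Measurable[H] fun ω => -(-Y ω) := hY.1.neg
  simpa only [neg_neg] using h

theorem IsCondEssInf.ae_le (hY : IsCondEssInf P H X Y) : ∀ᵐ ω ∂P, Y ω ≤ X ω :=
  hY.2.2.1.mono fun _ h => neg_le_neg_iff.mp h

theorem IsCondEssInf.le_ae_on (hY : IsCondEssInf P H X Y) {A : Set Ω}
    (hA : MeasurableSet[H] A) (hZ : Measurable[H] Z) (hZX : ∀ᵐ ω ∂P, ω ∈ A → Z ω ≤ X ω) :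
    ∀ᵐ ω ∂P, ω ∈ A → Z ω ≤ Y ω := by
  filter_upwards [IsCondEssSup.ae_le_on hY hA hZ.neg
    (hZX.mono fun ω h hω => neg_le_neg (h hω))] with ω h hω
  exact neg_le_neg_iff.mp (h hω)

end CondEssSup

section Market

variable {Ω : Type*} {F : MeasurableSpace Ω} {P : @Measure Ω F} {H : MeasurableSpace Ω}

theorem ae_nonneg_of_nonneg_add_mul_sub {S₀ S₁ mS MS θ v : Ω → ℝ}
    (hmS : IsCondEssInf P H S₁ mS) (hMS : IsCondEssSup P H S₁ MS)
    (hstrict : ∀ᵐ ω ∂P, 0 < S₀ ω - mS ω ∧ 0 < MS ω - S₀ ω)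
    (hS₀ : Measurable[H] S₀) (hθ : Measurable[H] θ) (hv : Measurable[H] v)
    (hgain : ∀ᵐ ω ∂P, 0 ≤ v ω + θ ω * (S₁ ω - S₀ ω)) :
    ∀ᵐ ω ∂P, 0 ≤ v ω ∧ (θ ω ≠ 0 → 0 < v ω) := by
  have hZ : Measurable[H] fun ω => S₀ ω - v ω / θ ω := hS₀.sub (hv.div hθ)
  have hlong : ∀ᵐ ω ∂P, 0 < θ ω → S₀ ω - v ω / θ ω ≤ mS ω := by
    refine hmS.le_ae_on (measurableSet_lt measurable_const hθ) hZ ?_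
    filter_upwards [hgain] with ω h hpos
    have : S₀ ω - S₁ ω ≤ v ω / θ ω := (le_div_iff₀ hpos).mpr (by linarith)
    linarith
  have hshort : ∀ᵐ ω ∂P, θ ω < 0 → MS ω ≤ S₀ ω - v ω / θ ω := by
    refine hMS.ae_le_on (measurableSet_lt hθ measurable_const) hZ ?_
    filter_upwards [hgain] with ω h hneg
    have : v ω / θ ω ≤ S₀ ω - S₁ ω := (div_le_iff_of_neg hneg).mpr (by linarith)
    linarith
  filter_upwards [hlong, hshort, hstrict, hgain] with ω hl hs ⟨hm, hM⟩ hg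
  rcases lt_trichotomy (θ ω) 0 with hneg | hzero | hpos
  · have hq : v ω / θ ω < 0 := by linarith [hs hneg]
    have hv : 0 < v ω := by
      simpa [div_mul_cancel₀ _ hneg.ne] using mul_pos_of_neg_of_neg hq hneg
    exact ⟨hv.le, fun _ => hv⟩
  · simp only [hzero, zero_mul, add_zero] at hg
    exact ⟨hg, fun h => absurd hzero h⟩
  · have hv : 0 < v ω := (div_pos_iff_of_pos_right hpos).mp (by linarith [hl hpos])
    exact ⟨hv.le, fun _ => hv⟩

variable {𝓕 : ℕ → MeasurableSpace Ω} {S θ : ℕ → Ω → ℝ} {T : ℕ}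

theorem portfolioValue_self (S θ : ℕ → Ω → ℝ) (t : ℕ) : PortfolioValue Ω S θ t t = 0 := by
  funext ω
  simp [PortfolioValue]

theorem portfolioValue_succ (S θ : ℕ → Ω → ℝ) {t n : ℕ} (h : t ≤ n) :
    PortfolioValue Ω S θ t (n + 1) =
      fun ω => PortfolioValue Ω S θ t n ω + θ n ω * (S (n + 1) ω - S n ω) := by
  ext ω
  simp only [PortfolioValue, Finset.sum_Ico_succ_top h]

theorem measurable_portfolioValue (h𝓕mono : Monotone 𝓕)
    (hSmeas : ∀ t, Measurable[𝓕 t] (S t)) (hθ : ∀ u, Measurable[𝓕 u] (θ u)) (t n : ℕ) :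
    Measurable[𝓕 n] (PortfolioValue Ω S θ t n) := by
  refine Finset.measurable_sum _ fun u hu => ?_
  have hun : u < n := (Finset.mem_Ico.mp hu).2
  exact ((hθ u).mono (h𝓕mono hun.le) le_rfl).mul
    (((hSmeas (u + 1)).mono (h𝓕mono hun) le_rfl).sub ((hSmeas u).mono (h𝓕mono hun.le) le_rfl))

theorem na_of_strict [IsFiniteMeasure P] (h𝓕mono : Monotone 𝓕) (h𝓕le : ∀ t, 𝓕 t ≤ F)
    (hSmeas : ∀ t, Measurable[𝓕 t] (S t)) (hSbdd : ∀ t, EssBdd P (S t))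
    (hstrict : ∀ t, t < T → ∀ mS MS : Ω → ℝ,
      IsCondEssInf P (𝓕 t) (S (t + 1)) mS → IsCondEssSup P (𝓕 t) (S (t + 1)) MS →
      ∀ᵐ ω ∂P, 0 < S t ω - mS ω ∧ 0 < MS ω - S t ω) :
    NA P 𝓕 S T := by
  intro t ht θ hθ
  suffices ∀ n, t ≤ n → n ≤ T → (∀ᵐ ω ∂P, 0 ≤ PortfolioValue Ω S θ t n ω) →
      PortfolioValue Ω S θ t n =ᵐ[P] fun _ => (0 : ℝ) from this T ht.le le_rfl
  intro n htn
  induction n, htn using Nat.le_induction with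
  | base => exact fun _ _ => by rw [portfolioValue_self]; rfl
  | succ n htn ih =>
    intro hnT hgain
    obtain ⟨mS, hmS⟩ := exists_isCondEssInf (h𝓕le n) (hSbdd (n + 1))
    obtain ⟨MS, hMS⟩ := exists_isCondEssSup (h𝓕le n) (hSbdd (n + 1))
    rw [portfolioValue_succ S θ htn] at hgain ⊢
    have hstep := ae_nonneg_of_nonneg_add_mul_sub hmS hMS (hstrict n hnT mS MS hmS hMS)
      (hSmeas n) (hθ n).1 (measurable_portfolioValue h𝓕mono hSmeas (fun u => (hθ u).1) t n)
      hgain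
    have hzero := ih (Nat.le_of_succ_le hnT) (hstep.mono fun _ h => h.1)
    filter_upwards [hstep, hzero] with ω ⟨_, hpos⟩ hz
    have hθn : θ n ω = 0 := by
      by_contra h
      exact (hpos h).ne' hz
    simp [hz, hθn]

theorem IsStrategy.indicator_from (h𝓕mono : Monotone 𝓕) (hθ : IsStrategy P 𝓕 θ) {t : ℕ}
    {A : Set Ω} (hA : MeasurableSet[𝓕 t] A) :
    IsStrategy P 𝓕 fun u => if t ≤ u then A.indicator (θ u) else 0 := by
  intro u
  obtain ⟨c, hc⟩ := (hθ u).2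
  refine ⟨?_, c, hc.mono fun ω h => ?_⟩
  · dsimp only
    split_ifs with htu
    · exact (hθ u).1.indicator (h𝓕mono htu _ hA)
    · exact measurable_const
  · dsimp only
    split_ifs
    · by_cases hω : ω ∈ A <;> simp [hω, h, (abs_nonneg _).trans h]
    · simpa using (abs_nonneg _).trans h

theorem portfolioValue_indicator_from (S θ : ℕ → Ω → ℝ) (t T : ℕ) (A : Set Ω) :
    PortfolioValue Ω S (fun u => if t ≤ u then A.indicator (θ u) else 0) t T =
      A.indicator (PortfolioValue Ω S θ t T) := by
  ext ω
  by_cases hω : ω ∈ A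
  · rw [Set.indicator_of_mem hω]
    exact Finset.sum_congr rfl fun u hu => by simp [(Finset.mem_Ico.mp hu).1, hω]
  · rw [Set.indicator_of_notMem hω]
    exact Finset.sum_eq_zero fun u hu => by simp [(Finset.mem_Ico.mp hu).1, hω]

theorem aip_of_na (h𝓕mono : Monotone 𝓕) (hNA : NA P 𝓕 S T) : AIP P 𝓕 S T := by
  intro t ht θ hθ mv hmv
  set A := {ω | 0 < mv ω}
  have hA : MeasurableSet[𝓕 t] A := measurableSet_lt measurable_const hmv.measurable
  have hzero := hNA t ht _ (hθ.indicator_from h𝓕mono hA) (by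
    rw [portfolioValue_indicator_from]
    filter_upwards [hmv.ae_le] with ω h
    by_cases hω : ω ∈ A
    · simpa [hω] using hω.out.le.trans h
    · simp [hω])
  rw [portfolioValue_indicator_from] at hzero
  filter_upwards [hzero, hmv.ae_le] with ω hz hle
  by_contra hpos
  have hω : ω ∈ A := lt_of_not_ge hpos
  rw [Set.indicator_of_mem hω] at hz
  exact hpos (hle.trans hz.le)

end Market

theorem na_iff_aip_general {Ω : Type*} [F : MeasurableSpace Ω]
    (P : Measure Ω) [IsProbabilityMeasure P] (T : ℕ)
    (𝓕 : ℕ → MeasurableSpace Ω) (h𝓕mono : Monotone 𝓕) (h𝓕le : ∀ t, 𝓕 t ≤ F)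
    (S : ℕ → Ω → ℝ) (hSmeas : ∀ t, Measurable[𝓕 t] (S t))
    (hSbdd : ∀ t, EssBdd P (S t))
    (hstrict : ∀ t, t < T → ∀ mS MS : Ω → ℝ,
      IsCondEssInf P (𝓕 t) (S (t + 1)) mS → IsCondEssSup P (𝓕 t) (S (t + 1)) MS →
      ∀ᵐ ω ∂P, 0 < S t ω - mS ω ∧ 0 < MS ω - S t ω) :
    NA P 𝓕 S T ↔ AIP P 𝓕 S T :=
  ⟨aip_of_na h𝓕mono, fun _ => na_of_strict h𝓕mono h𝓕le hSmeas hSbdd hstrict⟩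

/-- If the price process lies a.s. strictly between its conditional essential infimum and
supremum at every step, then no arbitrage (NA) is equivalent to absence of immediate
profit (AIP). -/
theorem na_iff_aip {Ω : Type*} [F : MeasurableSpace Ω]
    (P : Measure Ω) [IsProbabilityMeasure P] (T : ℕ)
    (𝓕 : ℕ → MeasurableSpace Ω) (h𝓕mono : Monotone 𝓕) (h𝓕le : ∀ t, 𝓕 t ≤ F)
    (S : ℕ → Ω → ℝ) (hSmeas : ∀ t, Measurable[𝓕 t] (S t))
    (hSbdd : ∀ t, EssBdd P (S t)) (hSnonneg : ∀ t, ∀ᵐ ω ∂P, 0 ≤ S t ω)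
    (hstrict : ∀ t, t < T → ∀ mS MS : Ω → ℝ,
      IsCondEssInf P (𝓕 t) (S (t + 1)) mS → IsCondEssSup P (𝓕 t) (S (t + 1)) MS →
      ∀ᵐ ω ∂P, 0 < S t ω - mS ω ∧ 0 < MS ω - S t ω) :
    NA P 𝓕 S T ↔ AIP P 𝓕 S T :=
  na_iff_aip_general (F := F) P T 𝓕 h𝓕mono h𝓕le S hSmeas hSbdd hstrict
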